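/- arXiv:1712.10123 — 2 statements merged into one kernel-verified Lean document; each statement's English description precedes it below -/
import Mathlib

section
/- An element x of a trim lattice L is left modular if and only if x lies on the spine of L (i.e., on some chain of maximal length). -/
/-- An element `x` of a lattice is *left modular* if `(y ⊔ x) ⊓ z = y ⊔ (x ⊓ z)`
for all `y ≤ z`. -/
def LeftModular {L : Type*} [Lattice L] (x : L) : Prop :=
  ∀ y z : L, y ≤ z → (y ⊔ x) ⊓ z = y ⊔ (x ⊓ z)

/-- The data of an extremal lattice of length `n` together with a fixed
maximal-length chain `x₀ ⋖ ⋯ ⋖ xₙ` and the induced numberings of the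
join-irreducibles `j₁, …, jₙ` and meet-irreducibles `m₁, …, mₙ`. -/
structure ExtremalChainData (L : Type*) [Lattice L] [Fintype L] [BoundedOrder L]
    (n : ℕ) where
  x : Fin (n + 1) → L
  x_strictMono : StrictMono x
  x_bot : x 0 = ⊥
  x_top : x (Fin.last n) = ⊤
  maxlen : ∀ (m : ℕ) (c : Fin (m + 1) → L), StrictMono c → m ≤ n
  j : Fin n → L
  m : Fin n → L
  j_irr : ∀ i, SupIrred (j i)
  m_irr : ∀ i, InfIrred (m i)
  j_inj : Function.Injective j
  m_inj : Function.Injective m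
  j_surj : ∀ a : L, SupIrred a → a ∈ Set.range j
  m_surj : ∀ a : L, InfIrred a → a ∈ Set.range m
  x_eq_sup : ∀ i : Fin (n + 1),
    x i = (Finset.univ.filter fun k : Fin n => (k : ℕ) < (i : ℕ)).sup j
  x_eq_inf : ∀ i : Fin (n + 1),
    x i = (Finset.univ.filter fun k : Fin n => (i : ℕ) ≤ (k : ℕ)).inf m

namespace ExtremalChainData

variable {L : Type*} [Lattice L] [Fintype L] [BoundedOrder L] {n : ℕ}

/-- `x_J`: the set of indices of join-irreducibles lying below `a`. -/
def setJ (D : ExtremalChainData L n) (a : L) : Set (Fin n) := {i | D.j i ≤ a}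

/-- `x_M`: the set of indices of meet-irreducibles lying above `a`. -/
def setM (D : ExtremalChainData L n) (a : L) : Set (Fin n) := {i | a ≤ D.m i}

/-- The Galois graph: a directed edge `i → k` when `jᵢ ≰ m_k` and `i ≠ k`. -/
def galoisEdge (D : ExtremalChainData L n) (i k : Fin n) : Prop :=
  ¬ D.j i ≤ D.m k ∧ i ≠ k

/-- The left modular labelling: `i` is the label of the cover `y ⋖ z` iff `i` is
minimal with `y ⊔ (xᵢ ⊓ z) = z`. -/
def IsLabel (D : ExtremalChainData L n) (y z : L) (i : Fin n) : Prop :=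
  y ⊔ (D.x i.succ ⊓ z) = z ∧ ∀ k : Fin n, y ⊔ (D.x k.succ ⊓ z) = z → i ≤ k

open scoped Classical in
/-- `D^γ(a)`: the set of labels of cover relations below `a`. -/
noncomputable def downLabels (D : ExtremalChainData L n) (a : L) : Finset (Fin n) :=
  Finset.univ.filter fun i => ∃ y, y ⋖ a ∧ D.IsLabel y a i

open scoped Classical in
/-- `U^γ(a)`: the set of labels of cover relations above `a`. -/
noncomputable def upLabels (D : ExtremalChainData L n) (a : L) : Finset (Fin n) :=
  Finset.univ.filter fun i => ∃ z, a ⋖ z ∧ D.IsLabel a z i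

/-- The fixed chain consists of left modular elements, i.e. the lattice is trim. -/
def IsTrim (D : ExtremalChainData L n) : Prop := ∀ i, LeftModular (D.x i)

end ExtremalChainData

/-!
For the backward direction, let `a` be the `s`-th element of a chain of length `n`. Along the
chain `x_J` strictly grows and `x_M` strictly shrinks, so `|a_J| ≥ s` and `|a_M| ≥ n - s`; as
`jᵢ ≰ mᵢ` the two sets are disjoint, hence they cover `[n]`. In a trim lattice every cover
`u ⋖ v` carries a label `i` with `jᵢ ≤ v`, `jᵢ ≰ u`, `u ≤ mᵢ` and `v ≰ mᵢ`: take the first `i`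
with `xᵢ₊₁ ⊓ v ≰ u` and use left modularity of `xᵢ`. If `y ⊔ (a ⊓ z) < (y ⊔ a) ⊓ z`, a cover
just above the left side has a label `i` for which neither `jᵢ ≤ a` nor `a ≤ mᵢ` can hold.

For the forward direction, left modularity of `a` applied to `xₛ ⋖ xₛ₊₁` shows that
`xₛ ⊓ a < xₛ₊₁ ⊓ a` or `xₛ ⊔ a < xₛ₊₁ ⊔ a`. So the chain of all `xₛ ⊓ a` and `xₛ ⊔ a`, which
passes through `a`, has at least `n + 1` elements, and is therefore a chain of maximal length.
-/

open Set

theorem Fin.exists_castSucc_and_not_succ {n : ℕ} {P : Fin (n + 1) → Prop} (h0 : P 0)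
    (hlast : ¬ P (Fin.last n)) : ∃ i : Fin n, P i.castSucc ∧ ¬ P i.succ := by
  induction n with
  | zero => exact absurd h0 hlast
  | succ n ih =>
    by_cases h : P (Fin.last n).castSucc
    · exact ⟨Fin.last n, h, by rwa [Fin.succ_last]⟩
    · obtain ⟨i, hi, hi'⟩ := ih (P := fun i => P i.castSucc) h0 h
      exact ⟨i.castSucc, hi, by rwa [Fin.succ_castSucc]⟩

theorem Fin.val_le_of_strictMono {k : ℕ} {f : Fin k → ℕ} (hf : StrictMono f) (i : Fin k) :
    (i : ℕ) ≤ f i := by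
  obtain ⟨i, hi⟩ := i
  induction i with
  | zero => exact Nat.zero_le _
  | succ i ih =>
    exact (ih (by omega)).trans_lt (hf (show (⟨i, by omega⟩ : Fin k) < ⟨i + 1, hi⟩ by simp))

theorem IsChain.exists_strictMono_fin {α : Type*} [PartialOrder α] {s : Set α}
    (hs : IsChain (· ≤ ·) s) (hfin : s.Finite) {k : ℕ} (hk : s.ncard = k) :
    ∃ c : Fin k → α, StrictMono c ∧ range c = s := by
  classical
  let := hs.linearOrder
  have := hfin.fintype
  let e := Fintype.orderIsoFinOfCardEq s
    (by rw [Fintype.card_eq_nat_card, Nat.card_coe_set_eq, hk])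
  refine ⟨fun i => (e i : α), fun i j hij => e.strictMono hij, ?_⟩
  rw [range_comp' Subtype.val e, e.surjective.range_eq, image_univ, Subtype.range_coe]

theorem Monotone.isChain_range_inf_union_range_sup {ι α : Type*} [LinearOrder ι] [Lattice α]
    {f : ι → α} (hf : Monotone f) (a : α) :
    IsChain (· ≤ ·) (range (f · ⊓ a) ∪ range (f · ⊔ a)) := by
  refine isChain_union.2 ⟨Monotone.isChain_range fun _ _ h => inf_le_inf_right a (hf h),
    Monotone.isChain_range fun _ _ h => sup_le_sup_right (hf h) a, ?_⟩
  rintro _ ⟨s, rfl⟩ _ ⟨t, rfl⟩ -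
  exact Or.inl (inf_le_right.trans le_sup_right)

section Jumps

variable {α : Type*} [Preorder α] {m : ℕ} {w : Fin (m + 1) → α}

theorem Monotone.strictMonoOn_castSucc_of_jumps (hw : Monotone w) :
    StrictMonoOn (fun s : Fin m => w s.castSucc) {s : Fin m | w s.castSucc < w s.succ} := by
  intro s hs t _ hst
  exact hs.trans_le (hw (Fin.succ_le_castSucc_iff.2 hst))

theorem Monotone.strictMonoOn_succ_of_jumps (hw : Monotone w) :
    StrictMonoOn (fun s : Fin m => w s.succ) {s : Fin m | w s.castSucc < w s.succ} := by
  intro s _ t ht hst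
  exact (hw (Fin.succ_le_castSucc_iff.2 hst)).trans_lt ht

end Jumps

theorem LeftModular.add_one_le_ncard {α : Type*} [Lattice α] {a : α} (ha : LeftModular a)
    {n : ℕ} {x : Fin (n + 1) → α} (hx : StrictMono x) (hx0 : x 0 ≤ a) :
    n + 1 ≤ (range (x · ⊓ a) ∪ range (x · ⊔ a)).ncard := by
  classical
  set u : Fin (n + 1) → α := (x · ⊓ a)
  set v : Fin (n + 1) → α := (x · ⊔ a)
  have hu : Monotone u := fun _ _ h => inf_le_inf_right a (hx.monotone h)
  have hv : Monotone v := fun _ _ h => sup_le_sup_right (hx.monotone h) a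
  have hjump : ∀ s : Fin n, ¬ u s.castSucc < u s.succ → v s.castSucc < v s.succ := by
    intro s hu_s
    have hus : u s.succ = u s.castSucc :=
      ((hu s.castSucc_le_succ).lt_or_eq.resolve_left hu_s).symm
    refine (hv s.castSucc_le_succ).lt_of_ne fun hvs => (hx s.castSucc_lt_succ).ne' ?_
    calc x s.succ = (x s.castSucc ⊔ a) ⊓ x s.succ := by
          rw [show x s.castSucc ⊔ a = v s.succ from hvs, inf_eq_right.2 le_sup_left]
      _ = x s.castSucc ⊔ (a ⊓ x s.succ) := ha _ _ (hx s.castSucc_lt_succ).le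
      _ = x s.castSucc := by
          rw [inf_comm, show x s.succ ⊓ a = u s.castSucc from hus, sup_eq_left]
          exact inf_le_left
  -- each step `s` yields a distinct element, below `a` if the meets jump there, above `a` if not
  let g : Fin n → α := fun s => if u s.castSucc < u s.succ then u s.castSucc else v s.succ
  have hg_lt : ∀ s, u s.castSucc < u s.succ → g s < a := fun s hs => by
    simpa only [g, if_pos hs] using hs.trans_le inf_le_right
  have hg_gt : ∀ s, ¬ u s.castSucc < u s.succ → a < g s := fun s hs => by
    simpa only [g, if_neg hs] using le_sup_right.trans_lt (hjump s hs)
  have hg : Function.Injective g := by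
    intro s t hst
    by_cases hs : u s.castSucc < u s.succ <;> by_cases ht : u t.castSucc < u t.succ
    · exact hu.strictMonoOn_castSucc_of_jumps.injOn hs ht (by simpa [g, hs, ht] using hst)
    · exact absurd hst ((hg_lt s hs).trans (hg_gt t ht)).ne
    · exact absurd hst ((hg_lt t ht).trans (hg_gt s hs)).ne'
    · exact hv.strictMonoOn_succ_of_jumps.injOn (hjump s hs) (hjump t ht)
        (by simpa [g, hs, ht] using hst)
  have ha_notMem : a ∉ range g := by
    rintro ⟨s, hs⟩
    by_cases h : u s.castSucc < u s.succ
    · exact (hg_lt s h).ne hs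
    · exact (hg_gt s h).ne' hs
  have hsub : insert a (range g) ⊆ range u ∪ range v := by
    rintro _ (rfl | ⟨s, rfl⟩)
    · exact Or.inr ⟨0, sup_eq_right.2 hx0⟩
    · by_cases h : u s.castSucc < u s.succ
      · exact Or.inl ⟨_, (if_pos h).symm⟩
      · exact Or.inr ⟨_, (if_neg h).symm⟩
  calc n + 1 = (insert a (range g)).ncard := by
        rw [ncard_insert_of_notMem ha_notMem, ncard_range_of_injective hg, Nat.card_fin]
    _ ≤ _ := ncard_le_ncard hsub

namespace ExtremalChainData

variable {L : Type*} [Lattice L] [Fintype L] [BoundedOrder L] {n : ℕ}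

theorem exists_strictMono_mem_of_isChain (D : ExtremalChainData L n) {U : Set L}
    (hU : IsChain (· ≤ ·) U) {a : L} (ha : a ∈ U) (hcard : n + 1 ≤ U.ncard) :
    ∃ c : Fin (n + 1) → L, StrictMono c ∧ ∃ i, c i = a := by
  obtain ⟨m, hm⟩ : ∃ m, U.ncard = m + 1 := ⟨U.ncard - 1, by omega⟩
  obtain ⟨c, hc, rfl⟩ := hU.exists_strictMono_fin U.toFinite hm
  obtain rfl : m = n := le_antisymm (D.maxlen m c hc) (by omega)
  exact ⟨c, hc, ha⟩

variable (D : ExtremalChainData L n)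

theorem x_succ_eq_sup (i : Fin n) : D.x i.succ = D.x i.castSucc ⊔ D.j i := by
  rw [D.x_eq_sup, D.x_eq_sup, sup_comm, ← Finset.sup_insert]
  congr 1
  ext k
  simp only [Finset.mem_filter, Finset.mem_univ, true_and, Finset.mem_insert, Fin.val_succ,
    Fin.val_castSucc, Fin.ext_iff]
  omega

theorem x_castSucc_eq_inf (i : Fin n) : D.x i.castSucc = D.x i.succ ⊓ D.m i := by
  rw [D.x_eq_inf, D.x_eq_inf, inf_comm, ← Finset.inf_insert]
  congr 1
  ext k
  simp only [Finset.mem_filter, Finset.mem_univ, true_and, Finset.mem_insert, Fin.val_succ,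
    Fin.val_castSucc, Fin.ext_iff]
  omega

theorem j_not_le_m_self (i : Fin n) : ¬ D.j i ≤ D.m i := fun h =>
  (D.x_strictMono i.castSucc_lt_succ).ne' <| by
    rw [D.x_succ_eq_sup, sup_eq_left, D.x_castSucc_eq_inf]
    exact le_inf (D.x_succ_eq_sup i ▸ le_sup_right) h

theorem j_le_x_iff {k : Fin n} {t : Fin (n + 1)} : D.j k ≤ D.x t ↔ (k : ℕ) < t := by
  refine ⟨fun h => ?_, fun h => D.x_eq_sup t ▸ Finset.le_sup (by simpa using h)⟩
  by_contra! hkt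
  exact D.j_not_le_m_self k (h.trans (D.x_eq_inf t ▸ Finset.inf_le (by simpa using hkt)))

theorem x_le_m_iff {t : Fin (n + 1)} {k : Fin n} : D.x t ≤ D.m k ↔ (t : ℕ) ≤ k := by
  refine ⟨fun h => ?_, fun h => D.x_eq_inf t ▸ Finset.inf_le (by simpa using h)⟩
  by_contra! hkt
  exact D.j_not_le_m_self k ((D.j_le_x_iff.2 hkt).trans h)

theorem j_le_m_of_lt {i k : Fin n} (h : i < k) : D.j i ≤ D.m k :=
  (D.j_le_x_iff (t := i.succ).2 (by simp)).trans (D.x_le_m_iff.2 (by simpa using h))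

theorem exists_j_le_not_le {a b : L} (h : ¬ a ≤ b) : ∃ i, D.j i ≤ a ∧ ¬ D.j i ≤ b := by
  obtain ⟨s, rfl, hs⟩ := exists_supIrred_decomposition a
  obtain ⟨c, hc, hcb⟩ : ∃ c ∈ s, ¬ c ≤ b := by
    by_contra! hle
    exact h (Finset.sup_le hle)
  obtain ⟨i, rfl⟩ := D.j_surj c (hs hc)
  exact ⟨i, Finset.le_sup (f := id) hc, hcb⟩

theorem exists_le_m_not_le {a b : L} (h : ¬ a ≤ b) : ∃ i, b ≤ D.m i ∧ ¬ a ≤ D.m i := by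
  obtain ⟨s, rfl, hs⟩ := exists_infIrred_decomposition b
  obtain ⟨c, hc, hac⟩ : ∃ c ∈ s, ¬ a ≤ c := by
    by_contra! hle
    exact h (Finset.le_inf hle)
  obtain ⟨i, rfl⟩ := D.m_surj c (hs hc)
  exact ⟨i, Finset.inf_le (f := id) hc, hac⟩

theorem setJ_ssubset_setJ {a b : L} (h : a < b) : D.setJ a ⊂ D.setJ b := by
  obtain ⟨i, hib, hia⟩ := D.exists_j_le_not_le h.not_ge
  exact ssubset_of_subset_not_subset (fun k hk => le_trans hk h.le) fun hsub => hia (hsub hib)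

theorem setM_ssubset_setM {a b : L} (h : a < b) : D.setM b ⊂ D.setM a := by
  obtain ⟨i, hia, hib⟩ := D.exists_le_m_not_le h.not_ge
  exact ssubset_of_subset_not_subset (fun k hk => le_trans h.le hk) fun hsub => hib (hsub hia)

theorem disjoint_setJ_setM (a : L) : Disjoint (D.setJ a) (D.setM a) :=
  Set.disjoint_left.2 fun i hJ hM => D.j_not_le_m_self i (le_trans hJ hM)

theorem setJ_union_setM_of_strictMono {c : Fin (n + 1) → L} (hc : StrictMono c)
    (s : Fin (n + 1)) : D.setJ (c s) ∪ D.setM (c s) = univ := by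
  have hJ : (s : ℕ) ≤ (D.setJ (c s)).ncard :=
    Fin.val_le_of_strictMono (fun _ _ h => ncard_lt_ncard (D.setJ_ssubset_setJ (hc h))) s
  have hM : (s.rev : ℕ) ≤ (D.setM (c s.rev.rev)).ncard :=
    Fin.val_le_of_strictMono (f := fun t => (D.setM (c t.rev)).ncard)
      (fun _ _ h => ncard_lt_ncard (D.setM_ssubset_setM (hc (Fin.rev_lt_rev.2 h)))) s.rev
  rw [Fin.rev_rev, Fin.val_rev] at hM
  refine eq_of_subset_of_ncard_le (subset_univ _) ?_
  rw [ncard_union_eq (D.disjoint_setJ_setM _), ncard_univ, Nat.card_fin]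
  omega

theorem exists_x_castSucc_inf_le_of_not_le {u v : L} (h : ¬ v ≤ u) :
    ∃ i : Fin n, D.x i.castSucc ⊓ v ≤ u ∧ ¬ D.x i.succ ⊓ v ≤ u :=
  Fin.exists_castSucc_and_not_succ (P := fun t => D.x t ⊓ v ≤ u)
    (by simp [D.x_bot]) (by simpa [D.x_top] using h)

theorem exists_label_of_covBy (hD : D.IsTrim) {u v : L} (huv : u ⋖ v) :
    ∃ i, D.j i ≤ v ∧ ¬ D.j i ≤ u ∧ u ≤ D.m i ∧ ¬ v ≤ D.m i := by
  obtain ⟨i, hA, hB⟩ := D.exists_x_castSucc_inf_le_of_not_le huv.lt.not_ge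
  have hAv : (u ⊔ D.x i.castSucc) ⊓ v = u := by rw [hD _ u v huv.le, sup_eq_left.2 hA]
  have hju : ¬ D.j i ≤ u := fun h => hB <| by
    calc D.x i.succ ⊓ v ≤ (u ⊔ D.x i.castSucc) ⊓ v :=
          inf_le_inf_right v (D.x_succ_eq_sup i ▸ sup_le le_sup_right (h.trans le_sup_left))
      _ = u := hAv
  have hvm : ¬ v ≤ D.m i := fun h => hB <| by
    calc D.x i.succ ⊓ v ≤ D.x i.castSucc ⊓ v :=
          le_inf (D.x_castSucc_eq_inf i ▸ inf_le_inf_left _ h) inf_le_right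
      _ ≤ u := hA
  have hjv : D.j i ≤ v := by
    obtain ⟨k, hkB, hku⟩ := D.exists_j_le_not_le hB
    have hk : (k : ℕ) < i + 1 := by simpa using D.j_le_x_iff.1 (hkB.trans inf_le_left)
    obtain rfl : k = i := by
      refine Fin.ext (le_antisymm (Nat.lt_succ_iff.1 hk) (not_lt.1 fun hki => ?_))
      exact hku ((le_inf (D.j_le_x_iff.2 hki) (hkB.trans inf_le_right)).trans hA)
    exact hkB.trans inf_le_right
  have hv : u ⊔ D.j i = v := (huv.eq_or_eq le_sup_left (sup_le huv.le hjv)).resolve_left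
    fun h => hju (h ▸ le_sup_right)
  have hum : u ≤ D.m i := by
    have hvA : ¬ v ≤ u ⊔ D.x i.castSucc := fun h => huv.lt.ne' (by rw [← hAv, inf_eq_right.2 h])
    obtain ⟨k, hk, hvk⟩ := D.exists_le_m_not_le hvA
    have hik : (i : ℕ) ≤ k := by simpa using D.x_le_m_iff.1 (le_sup_right.trans hk)
    obtain rfl : i = k := by
      by_contra hne
      exact hvk (hv ▸ sup_le (le_sup_left.trans hk) (D.j_le_m_of_lt (lt_of_le_of_ne hik hne)))
    exact le_sup_left.trans hk
  exact ⟨i, hjv, hju, hum, hvm⟩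

theorem leftModular_of_setJ_union_setM (hD : D.IsTrim) {a : L}
    (ha : D.setJ a ∪ D.setM a = univ) : LeftModular a := by
  intro y z hyz
  have hle : y ⊔ (a ⊓ z) ≤ (y ⊔ a) ⊓ z :=
    sup_le (le_inf le_sup_left hyz) (inf_le_inf_right z le_sup_right)
  refine le_antisymm ?_ hle
  by_contra hlt
  obtain ⟨w, hcov, hw⟩ := exists_covBy_le_of_lt (hle.lt_of_not_ge hlt)
  obtain ⟨i, hjw, hju, hum, hwm⟩ := D.exists_label_of_covBy hD hcov
  rcases (ha.symm ▸ mem_univ i : i ∈ D.setJ a ∪ D.setM a) with hja | ham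
  · exact hju ((le_inf hja (hjw.trans (hw.trans inf_le_right))).trans le_sup_right)
  · exact hwm (hw.trans (inf_le_left.trans (sup_le (le_sup_left.trans hum) ham)))

end ExtremalChainData

open ExtremalChainData

/-- An element of a trim lattice is left modular iff it lies on the spine,
i.e. on some chain of maximal length. -/
theorem leftModular_iff_spine {L : Type*} [Lattice L] [Fintype L] [BoundedOrder L]
    {n : ℕ} (D : ExtremalChainData L n) (hD : D.IsTrim) :
    ∀ a : L, LeftModular a ↔
      ∃ c : Fin (n + 1) → L, StrictMono c ∧ ∃ i, c i = a := by
  intro a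
  constructor
  · intro ha
    have hx0 : D.x 0 ≤ a := D.x_bot ▸ bot_le
    exact D.exists_strictMono_mem_of_isChain
      (D.x_strictMono.monotone.isChain_range_inf_union_range_sup a)
      (Or.inr ⟨0, sup_eq_right.2 hx0⟩) (ha.add_one_le_ncard D.x_strictMono hx0)
  · rintro ⟨c, hc, i, rfl⟩
    exact D.leftModular_of_setJ_union_setM hD (D.setJ_union_setM_of_strictMono hc i)
end

section
/- In a trim lattice L with left modular labelling γ, an element y lies in the interval L_1 = [0̂, m_1] if and only if 1 is an upward label of y, i.e., there is a cover y ⋖ z with γ(y ⋖ z) = 1. -/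
open ExtremalChainData

/-!
Since `x₁` is the meet of `m₂, …, mₙ` while `⊥ = x₀` is the meet of all the `mₖ`, an element `y`
lies below `m₁` exactly when `x₁ ≰ y`: if `y ≰ m₁`, every meet-irreducible above `y` is some `mₖ`
with `k ≥ 2`, hence lies above `x₁`. For a left modular `x`, the condition `x ≰ y` says exactly
that some cover `y ⋖ z` satisfies `y ⊔ (x ⊓ z) = z`: take `z ≤ y ⊔ x` and use
`(y ⊔ x) ⊓ z = y ⊔ (x ⊓ z)`. With `x = x₁` this is a cover with label `1`, the least label.
-/

theorem le_of_forall_infIrred_le {α : Type*} [SemilatticeInf α] [OrderTop α] [WellFoundedGT α]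
    {a b : α} (h : ∀ m, InfIrred m → b ≤ m → a ≤ m) : a ≤ b := by
  obtain ⟨s, rfl, hs⟩ := exists_infIrred_decomposition b
  exact Finset.le_inf fun m hm => h m (hs hm) (Finset.inf_le hm)

theorem LeftModular.not_le_iff_exists_covBy {L : Type*} [Lattice L] [Finite L] {x y : L}
    (hx : LeftModular x) : ¬ x ≤ y ↔ ∃ z, y ⋖ z ∧ y ⊔ (x ⊓ z) = z := by
  constructor
  · intro hxy
    obtain ⟨z, hyz, hz⟩ := (IsStronglyAtomic.of_wellFounded_lt wellFounded_lt)
      |>.exists_covBy_le_of_lt y (y ⊔ x) (left_lt_sup.2 hxy)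
    exact ⟨z, hyz, by rw [← hx y z hyz.le, inf_eq_right.2 hz]⟩
  · rintro ⟨z, hyz, hz⟩ hxy
    exact hyz.lt.not_ge (hz ▸ sup_le le_rfl (inf_le_left.trans hxy))

namespace ExtremalChainData

variable {L : Type*} [Lattice L] [Fintype L] [BoundedOrder L] {n : ℕ} (D : ExtremalChainData L n)

theorem x_le_m {i : Fin (n + 1)} {k : Fin n} (h : (i : ℕ) ≤ k) : D.x i ≤ D.m k := by
  rw [D.x_eq_inf i]
  exact Finset.inf_le (by simpa using h)

theorem eq_bot_of_forall_le_m {a : L} (h : ∀ k, a ≤ D.m k) : a = ⊥ :=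
  le_bot_iff.1 (D.x_bot ▸ D.x_eq_inf 0 ▸ Finset.le_inf fun k _ => h k)

theorem x_ne_bot {i : Fin (n + 1)} (hi : i ≠ 0) : D.x i ≠ ⊥ :=
  D.x_bot ▸ D.x_strictMono.injective.ne hi

theorem not_x_one_le_iff_le_m_zero (hn : 0 < n) {y : L} :
    ¬ D.x (Fin.succ ⟨0, hn⟩) ≤ y ↔ y ≤ D.m ⟨0, hn⟩ := by
  have hX_le_m : ∀ k : Fin n, k ≠ ⟨0, hn⟩ → D.x (Fin.succ ⟨0, hn⟩) ≤ D.m k := fun k hk =>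
    D.x_le_m (Nat.one_le_iff_ne_zero.2 fun h => hk (Fin.ext h))
  constructor
  · intro hXy
    by_contra hy
    refine hXy (le_of_forall_infIrred_le fun m hm hym => ?_)
    obtain ⟨k, rfl⟩ := D.m_surj m hm
    exact hX_le_m k (by rintro rfl; exact hy hym)
  · intro hy hXy
    refine D.x_ne_bot (Fin.succ_ne_zero ⟨0, hn⟩) (D.eq_bot_of_forall_le_m fun k => ?_)
    by_cases hk : k = ⟨0, hn⟩
    · exact hk ▸ hXy.trans hy
    · exact hX_le_m k hk

theorem isLabel_zero_iff (hn : 0 < n) {y z : L} :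
    D.IsLabel y z ⟨0, hn⟩ ↔ y ⊔ (D.x (Fin.succ ⟨0, hn⟩) ⊓ z) = z :=
  ⟨And.left, fun h => ⟨h, fun _ _ => Fin.mk_le_of_le_val (Nat.zero_le _)⟩⟩

end ExtremalChainData

/-- In a trim lattice, an element `y` lies in `L₁ = [⊥, m₁]` iff `1` is an
upward label of `y`, i.e. some cover `y ⋖ z` has label `1`. -/
theorem mem_L1_iff_up_label_one {L : Type*} [Lattice L] [Fintype L] [BoundedOrder L]
    {n : ℕ} (D : ExtremalChainData L n) (hD : D.IsTrim) (hn : 0 < n) :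
    ∀ y : L, y ≤ D.m ⟨0, hn⟩ ↔ ∃ z, y ⋖ z ∧ D.IsLabel y z ⟨0, hn⟩ := by
  intro y
  simp only [D.isLabel_zero_iff hn]
  rw [← D.not_x_one_le_iff_le_m_zero hn]
  exact (hD _).not_le_iff_exists_covBy
end
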